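/- arXiv:1503.07202 — 2 statements merged into one kernel-verified Lean document; each statement's English description precedes it below -/
import Mathlib

section
/- Let μ be a σ-finite measure, p a bounded variable exponent, and Ω₁, …, Ω_l pairwise disjoint measurable sets of finite positive measure on which p takes constant values p₁, …, p_l. Define the finite rank operator L f = Σ_{k=1}^l μ(Ω_k)^{-1} (∫_{Ω_k} f dμ) 1_{Ω_k} on L^{p(·)}(μ). Then the operator norm of L on L^{p(·)}(μ) is at most 2. -/
/-! On each block `S k` the exponent is a constant `q ≥ 1`, so Jensen's inequality for
`t ↦ t ^ q` gives `μ (S k) * |⨍_{S k} f / λ| ^ q ≤ ∫_{S k} |f / λ| ^ q`, while off the blocks the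
averaged function vanishes. Summing over the blocks, the modular of the averaged function is at
most that of `f` for every `λ > 0`, so its Luxemburg norm is at most `‖f‖`, hence at most `2 ‖f‖`.
-/

open MeasureTheory Filter Topology ENNReal

/-- The contribution `|t|^{q}` to the variable-exponent modular, with the usual
convention at `q = ∞` (zero if `t ≤ 1`, infinite otherwise). -/
noncomputable def evpow (t : ℝ) (q : ℝ≥0∞) : ℝ≥0∞ :=
  if q = ∞ then (if t ≤ 1 then 0 else ∞) else ENNReal.ofReal t ^ q.toReal

/-- The modular `∫ |f(x)/λ|^{p(x)} dμ` of a variable exponent Lebesgue space. -/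
noncomputable def eModular {Ω : Type*} [MeasurableSpace Ω] (μ : Measure Ω)
    (p : Ω → ℝ≥0∞) {E : Type*} [NormedAddCommGroup E] (f : Ω → E) (lam : ℝ) : ℝ≥0∞ :=
  ∫⁻ x, evpow (‖f x‖ / lam) (p x) ∂μ

/-- The Luxemburg norm of the variable exponent Lebesgue space `L^{p(·)}(μ)`. -/
noncomputable def eVNorm {Ω : Type*} [MeasurableSpace Ω] (μ : Measure Ω)
    (p : Ω → ℝ≥0∞) {E : Type*} [NormedAddCommGroup E] (f : Ω → E) : ℝ :=
  sInf {lam : ℝ | 0 < lam ∧ eModular μ p f lam ≤ 1}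

/-- Membership in the variable exponent Lebesgue space `L^{p(·)}(μ)`. -/
def MemEVLp {Ω : Type*} [MeasurableSpace Ω] (μ : Measure Ω)
    (p : Ω → ℝ≥0∞) {E : Type*} [NormedAddCommGroup E] (f : Ω → E) : Prop :=
  AEStronglyMeasurable f μ ∧ ∃ lam : ℝ, 0 < lam ∧ eModular μ p f lam ≤ 1

/-- The variable exponent sequence space norm `‖h‖_{ℓ^{q(·)}}`. -/
noncomputable def eSeqNorm {I : Type*} (q : I → ℝ≥0∞) {E : Type*} [NormedAddCommGroup E]
    (h : I → E) : ℝ :=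
  sInf {lam : ℝ | 0 < lam ∧ ∑' i, evpow (‖h i‖ / lam) (q i) ≤ 1}

theorem evpow_of_ne_top (t : ℝ) {q : ℝ≥0∞} (hq : q ≠ ∞) :
    evpow t q = ENNReal.ofReal t ^ q.toReal :=
  if_neg hq

theorem evpow_zero {q : ℝ≥0∞} (hq : 1 ≤ q) : evpow 0 q = 0 := by
  by_cases hqtop : q = ∞
  · simp [evpow, hqtop]
  · have : 0 < q.toReal := ENNReal.toReal_pos (zero_lt_one.trans_le hq).ne' hqtop
    rw [evpow_of_ne_top _ hqtop, ENNReal.ofReal_zero, ENNReal.zero_rpow_of_pos this]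

theorem eVNorm_nonneg {Ω E : Type*} [MeasurableSpace Ω] [NormedAddCommGroup E]
    (μ : Measure Ω) (p : Ω → ℝ≥0∞) (f : Ω → E) : 0 ≤ eVNorm μ p f :=
  Real.sInf_nonneg fun _ hlam => hlam.1.le

theorem eVNorm_le_eVNorm_of_eModular_le {Ω E F : Type*} [MeasurableSpace Ω]
    [NormedAddCommGroup E] [NormedAddCommGroup F] {μ : Measure Ω} {p : Ω → ℝ≥0∞}
    {f : Ω → E} {g : Ω → F} (hf : ∃ lam : ℝ, 0 < lam ∧ eModular μ p f lam ≤ 1)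
    (hgf : ∀ lam : ℝ, 0 < lam → eModular μ p g lam ≤ eModular μ p f lam) :
    eVNorm μ p g ≤ eVNorm μ p f :=
  csInf_le_csInf ⟨0, fun _ hlam => hlam.1.le⟩ hf
    fun lam hlam => ⟨hlam.1, (hgf lam hlam.1).trans hlam.2⟩

theorem laverage_rpow_le {α : Type*} [MeasurableSpace α] {ν : Measure α} [IsFiniteMeasure ν]
    {g : α → ℝ≥0∞} (hg : AEMeasurable g ν) {q : ℝ} (hq : 1 ≤ q) :
    (⨍⁻ x, g x ∂ν) ^ q ≤ ⨍⁻ x, g x ^ q ∂ν := by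
  rcases eq_zero_or_neZero ν with rfl | _
  · simp [ENNReal.zero_rpow_of_pos (zero_lt_one.trans_le hq)]
  have h := eLpNorm'_le_eLpNorm'_of_exponent_le one_pos hq ((ν Set.univ)⁻¹ • ν)
    (hg.smul_measure _).aestronglyMeasurable
  simp only [eLpNorm', enorm_eq_self, ENNReal.rpow_one, div_one] at h
  rw [laverage_eq', laverage_eq']
  calc (∫⁻ x, g x ∂(ν Set.univ)⁻¹ • ν) ^ q
      ≤ ((∫⁻ x, g x ^ q ∂(ν Set.univ)⁻¹ • ν) ^ (1 / q)) ^ q :=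
        ENNReal.rpow_le_rpow h (zero_le_one.trans hq)
    _ = ∫⁻ x, g x ^ q ∂(ν Set.univ)⁻¹ • ν := by
        rw [one_div, ENNReal.rpow_inv_rpow (zero_lt_one.trans_le hq).ne']

theorem enorm_average_le {α E : Type*} [MeasurableSpace α] [NormedAddCommGroup E]
    [NormedSpace ℝ E] (ν : Measure α) (f : α → E) :
    ‖⨍ x, f x ∂ν‖ₑ ≤ ⨍⁻ x, ‖f x‖ₑ ∂ν := by
  rw [average_eq, laverage_eq, enorm_smul, div_eq_mul_inv, mul_comm]
  gcongr
  · exact enorm_integral_le_lintegral_enorm f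
  · rw [measureReal_def, ← ENNReal.toReal_inv, Real.enorm_eq_ofReal ENNReal.toReal_nonneg]
    exact ENNReal.ofReal_toReal_le

theorem measure_mul_evpow_setAverage_le {Ω E : Type*} [MeasurableSpace Ω]
    [NormedAddCommGroup E] [NormedSpace ℝ E] {μ : Measure Ω} {s : Set Ω} (hs : μ s ≠ ∞)
    {f : Ω → E} (hf : AEStronglyMeasurable f (μ.restrict s)) {q : ℝ≥0∞} (hq1 : 1 ≤ q)
    (hq : q ≠ ∞) {lam : ℝ} (hlam : 0 < lam) :
    μ s * evpow (‖⨍ x in s, f x ∂μ‖ / lam) q ≤ ∫⁻ x in s, evpow (‖f x‖ / lam) q ∂μ := by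
  have := isFiniteMeasure_restrict.2 hs
  have hq1' : 1 ≤ q.toReal := by simpa using ENNReal.toReal_mono hq hq1
  have hscale : ∀ v : E, ‖v‖ / lam = ‖lam⁻¹ • v‖ := fun v => by
    rw [norm_smul, Real.norm_of_nonneg (inv_nonneg.2 hlam.le), div_eq_inv_mul]
  have havg : lam⁻¹ • ⨍ x in s, f x ∂μ = ⨍ x in s, lam⁻¹ • f x ∂μ := by
    simp only [average_eq, integral_smul, smul_comm lam⁻¹]
  simp only [evpow_of_ne_top _ hq, hscale, havg, ofReal_norm]
  calc μ s * ‖⨍ x in s, lam⁻¹ • f x ∂μ‖ₑ ^ q.toReal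
      ≤ μ s * (⨍⁻ x in s, ‖lam⁻¹ • f x‖ₑ ∂μ) ^ q.toReal := by
        gcongr; exact enorm_average_le _ _
    _ ≤ μ s * ⨍⁻ x in s, ‖lam⁻¹ • f x‖ₑ ^ q.toReal ∂μ := by
        gcongr; exact laverage_rpow_le (hf.const_smul _).enorm hq1'
    _ = ∫⁻ x in s, ‖lam⁻¹ • f x‖ₑ ^ q.toReal ∂μ := measure_mul_setLAverage _ hs

noncomputable def averagingOperator {Ω ι : Type*} [MeasurableSpace Ω] [Fintype ι]
    (μ : Measure Ω) (S : ι → Set Ω) (f : Ω → ℝ) : Ω → ℝ :=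
  fun x => ∑ k, (μ (S k)).toReal⁻¹ * (∫ y in S k, f y ∂μ) * (S k).indicator (fun _ => (1 : ℝ)) x

section averagingOperator

variable {Ω ι : Type*} [MeasurableSpace Ω] [Fintype ι] {μ : Measure Ω} {S : ι → Set Ω}

theorem averagingOperator_apply_of_mem (hdisj : Pairwise (Function.onFun Disjoint S))
    (f : Ω → ℝ) {k : ι} {x : Ω} (hx : x ∈ S k) :
    averagingOperator μ S f x = ⨍ y in S k, f y ∂μ := by
  rw [averagingOperator, Finset.sum_eq_single k, Set.indicator_of_mem hx, mul_one, setAverage_eq,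
    measureReal_def, smul_eq_mul]
  · intro j _ hjk
    rw [Set.indicator_of_notMem (Set.disjoint_left.mp (hdisj hjk.symm) hx), mul_zero]
  · exact fun hk => absurd (Finset.mem_univ k) hk

theorem averagingOperator_apply_of_forall_notMem (f : Ω → ℝ) {x : Ω} (hx : ∀ k, x ∉ S k) :
    averagingOperator μ S f x = 0 :=
  Finset.sum_eq_zero fun k _ => by rw [Set.indicator_of_notMem (hx k), mul_zero]

theorem eModular_averagingOperator_le (hmeas : ∀ k, MeasurableSet (S k))
    (hdisj : Pairwise (Function.onFun Disjoint S)) (hfin : ∀ k, μ (S k) ≠ ∞)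
    {p : Ω → ℝ≥0∞} (hp1 : ∀ x, 1 ≤ p x) {pv : ι → ℝ≥0∞} (hpv : ∀ k, pv k ≠ ∞)
    (hconst : ∀ k, ∀ x ∈ S k, p x = pv k) {f : Ω → ℝ} (hf : AEStronglyMeasurable f μ)
    {lam : ℝ} (hlam : 0 < lam) :
    eModular μ p (averagingOperator μ S f) lam ≤ eModular μ p f lam := by
  have hsupp : (fun x => evpow (‖averagingOperator μ S f x‖ / lam) (p x)).support ⊆ ⋃ k, S k := by
    intro x hx
    by_contra hU
    simp only [Set.mem_iUnion, not_exists] at hU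
    exact hx (by simp only; rw [averagingOperator_apply_of_forall_notMem f hU, norm_zero, zero_div,
      evpow_zero (hp1 x)])
  have hblock : ∀ k, ∫⁻ x in S k, evpow (‖averagingOperator μ S f x‖ / lam) (p x) ∂μ
      ≤ ∫⁻ x in S k, evpow (‖f x‖ / lam) (p x) ∂μ := fun k => by
    rcases (S k).eq_empty_or_nonempty with hempty | ⟨x₀, hx₀⟩
    · simp [hempty]
    have hpv1 : 1 ≤ pv k := hconst k x₀ hx₀ ▸ hp1 x₀
    calc ∫⁻ x in S k, evpow (‖averagingOperator μ S f x‖ / lam) (p x) ∂μ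
        = ∫⁻ _ in S k, evpow (‖⨍ y in S k, f y ∂μ‖ / lam) (pv k) ∂μ :=
          setLIntegral_congr_fun (hmeas k) fun x hx => by
            rw [averagingOperator_apply_of_mem hdisj f hx, hconst k x hx]
      _ = μ (S k) * evpow (‖⨍ y in S k, f y ∂μ‖ / lam) (pv k) := by
          rw [setLIntegral_const, mul_comm]
      _ ≤ ∫⁻ x in S k, evpow (‖f x‖ / lam) (pv k) ∂μ :=
          measure_mul_evpow_setAverage_le (hfin k) hf.restrict hpv1 (hpv k) hlam
      _ = ∫⁻ x in S k, evpow (‖f x‖ / lam) (p x) ∂μ :=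
          setLIntegral_congr_fun (hmeas k) fun x hx => by rw [hconst k x hx]
  calc eModular μ p (averagingOperator μ S f) lam
      = ∑' k, ∫⁻ x in S k, evpow (‖averagingOperator μ S f x‖ / lam) (p x) ∂μ := by
        rw [eModular, ← setLIntegral_eq_of_support_subset hsupp, lintegral_iUnion hmeas hdisj]
    _ ≤ ∑' k, ∫⁻ x in S k, evpow (‖f x‖ / lam) (p x) ∂μ := ENNReal.tsum_le_tsum hblock
    _ = ∫⁻ x in ⋃ k, S k, evpow (‖f x‖ / lam) (p x) ∂μ := (lintegral_iUnion hmeas hdisj _).symm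
    _ ≤ eModular μ p f lam := setLIntegral_le_lintegral _ _

end averagingOperator

theorem averaging_operator_norm_le_two_general
    {Ω : Type*} [MeasurableSpace Ω] (μ : Measure Ω)
    (p : Ω → ℝ≥0∞) (hp1 : ∀ x, 1 ≤ p x)
    (hpbdd : ∃ C : ℝ≥0∞, C < ⊤ ∧ ∀ᵐ x ∂μ, p x ≤ C)
    (l : ℕ) (S : Fin l → Set Ω) (hmeas : ∀ k, MeasurableSet (S k))
    (hdisj : Pairwise (Function.onFun Disjoint S))
    (hfin : ∀ k, μ (S k) < ⊤) (hpos : ∀ k, 0 < μ (S k))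
    (pv : Fin l → ℝ≥0∞) (hconst : ∀ k, ∀ x ∈ S k, p x = pv k)
    (f : Ω → ℝ) (hf : MemEVLp μ p f) :
    eVNorm μ p (fun x => ∑ k, (μ (S k)).toReal⁻¹ * (∫ y in S k, f y ∂μ) *
        (S k).indicator (fun _ => (1 : ℝ)) x)
      ≤ 2 * eVNorm μ p f := by
  obtain ⟨hfm, hfmod⟩ := hf
  obtain ⟨C, hC, hpC⟩ := hpbdd
  have hpv : ∀ k, pv k ≠ ∞ := fun k => by
    have : (ae (μ.restrict (S k))).NeBot :=
      ae_neBot.2 (by simpa [Measure.restrict_apply_univ] using (hpos k).ne')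
    obtain ⟨x, hxS, hxC⟩ := ((ae_restrict_mem (hmeas k)).and (ae_restrict_of_ae hpC)).exists
    exact (hconst k x hxS ▸ hxC.trans_lt hC).ne
  calc eVNorm μ p (averagingOperator μ S f)
      ≤ eVNorm μ p f := eVNorm_le_eVNorm_of_eModular_le hfmod fun _ hlam =>
        eModular_averagingOperator_le hmeas hdisj (fun k => (hfin k).ne) hp1 hpv hconst hfm hlam
    _ ≤ 2 * eVNorm μ p f := le_mul_of_one_le_left (eVNorm_nonneg μ p f) one_le_two

/-- The averaging operator `L f = Σ_k μ(Ω_k)⁻¹ ⟨f, 1_{Ω_k}⟩ 1_{Ω_k}` associated to pairwise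
disjoint sets of finite positive measure on which the bounded exponent `p` is constant has
operator norm at most `2` on `L^{p(·)}(μ)`. -/
theorem averaging_operator_norm_le_two
    {Ω : Type*} [MeasurableSpace Ω] (μ : Measure Ω) [SigmaFinite μ]
    (hcomp : μ.IsComplete)
    (p : Ω → ℝ≥0∞) (hpm : Measurable p) (hp1 : ∀ x, 1 ≤ p x)
    (hpbdd : ∃ C : ℝ≥0∞, C < ⊤ ∧ ∀ᵐ x ∂μ, p x ≤ C)
    (l : ℕ) (S : Fin l → Set Ω) (hmeas : ∀ k, MeasurableSet (S k))
    (hdisj : Pairwise (Function.onFun Disjoint S))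
    (hfin : ∀ k, μ (S k) < ⊤) (hpos : ∀ k, 0 < μ (S k))
    (pv : Fin l → ℝ≥0∞) (hconst : ∀ k, ∀ x ∈ S k, p x = pv k)
    (f : Ω → ℝ) (hf : MemEVLp μ p f) :
    eVNorm μ p (fun x => ∑ k, (μ (S k)).toReal⁻¹ * (∫ y in S k, f y ∂μ) *
        (S k).indicator (fun _ => (1 : ℝ)) x)
      ≤ 2 * eVNorm μ p f :=
  averaging_operator_norm_le_two_general μ p hp1 hpbdd l S hmeas hdisj hfin hpos pv hconst f hf
end

section
/- Let μ be a σ-finite measure and p a simple variable exponent, constant equal to p_k on each of the disjoint sets Ω₁, …, Ω_l of finite positive measure. If f = Σ_{k=1}^l β_k 1_{Ω_k} is a simple function subordinate to this partition, then the ℓ^{p(·)} norm of the sequence (⟨f, u_k⟩)_{k=1}^l, where u_k = 1_{Ω_k}/μ(Ω_k)^{1/p_k'}, equals ||f||_{L^{p(·)}(μ)}. In particular if ||f||_{L^{p(·)}} ≤ 1 then ||(⟨f,u_k⟩)||_{ℓ^{p(·)}} ≤ 1. -/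
open MeasureTheory Filter Topology ENNReal

/-! On each `S k` both `f = β k` and `p = pv k` are constant, so the modular of `f` splits as
`Σ_k (|β k| / λ)^{p_k} μ(S k)`. Since `⟨f, u_k⟩ = β k μ(S k)^{1/p_k}`, the `k`-th term of the
`ℓ^{p(·)}` modular of the pairings is the same number. The two modulars agree for every `λ > 0`,
hence so do the Luxemburg norms defined from them. -/

lemma evpow_mul_rpow_inv_toReal (t : ℝ) {a : ℝ} (ha : 0 ≤ a) {q : ℝ≥0∞} (hq0 : q ≠ 0)
    (hq : q ≠ ∞) : evpow (t * a ^ q.toReal⁻¹) q = evpow t q * ENNReal.ofReal a := by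
  have hqr : 0 < q.toReal := ENNReal.toReal_pos hq0 hq
  rw [evpow, evpow, if_neg hq, if_neg hq, ENNReal.ofReal_mul' (Real.rpow_nonneg ha _),
    ENNReal.mul_rpow_of_nonneg _ _ hqr.le,
    ENNReal.ofReal_rpow_of_nonneg (Real.rpow_nonneg ha _) hqr.le, Real.rpow_inv_rpow ha hqr.ne']

lemma ENNReal.toReal_one_sub_inv {q : ℝ≥0∞} (hq : 1 ≤ q) :
    (1 - 1 / q).toReal = 1 - 1 / q.toReal := by
  rw [ENNReal.toReal_sub_of_le (by simpa using ENNReal.inv_le_one.mpr hq) ENNReal.one_ne_top,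
    one_div, one_div, ENNReal.toReal_inv, ENNReal.toReal_one]

lemma Real.div_rpow_one_sub_inv {a q : ℝ} (ha : 0 ≤ a) (hq : q ≠ 0) :
    a / a ^ (1 - 1 / q) = a ^ (1 / q) := by
  rcases ha.eq_or_lt with rfl | ha
  · rw [zero_div, Real.zero_rpow (one_div_ne_zero hq)]
  · rw [Real.rpow_sub ha, Real.rpow_one, div_div_cancel₀ ha.ne']

lemma sum_mul_indicator_one_of_mem {Ω ι : Type*} [Fintype ι] {S : ι → Set Ω}
    (hdisj : Pairwise (Function.onFun Disjoint S)) (β : ι → ℝ) {k : ι} {x : Ω} (hx : x ∈ S k) :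
    ∑ j, β j * (S j).indicator (fun _ => (1 : ℝ)) x = β k := by
  rw [Finset.sum_eq_single_of_mem k (Finset.mem_univ k), Set.indicator_of_mem hx, mul_one]
  intro j _ hjk
  rw [Set.indicator_of_notMem (fun hxj => Set.disjoint_left.mp (hdisj hjk) hxj hx), mul_zero]

lemma integral_mul_indicator_one_div {Ω : Type*} [MeasurableSpace Ω] (μ : Measure Ω)
    {s : Set Ω} (hs : MeasurableSet s) {f : Ω → ℝ} {b : ℝ} (hf : ∀ x ∈ s, f x = b) (c : ℝ) :
    ∫ x, f x * (s.indicator (fun _ => (1 : ℝ)) x / c) ∂μ = b * μ.real s / c := by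
  have hpointwise : (fun x => f x * (s.indicator (fun _ => (1 : ℝ)) x / c))
      = s.indicator (fun _ => b / c) := by
    ext x
    by_cases hx : x ∈ s
    · rw [Set.indicator_of_mem hx, Set.indicator_of_mem hx, hf x hx, mul_one_div]
    · rw [Set.indicator_of_notMem hx, Set.indicator_of_notMem hx, zero_div, mul_zero]
  rw [hpointwise, integral_indicator_const _ hs, smul_eq_mul]
  ring

lemma eModular_eq_tsum_of_piecewise_const {Ω ι E : Type*} [MeasurableSpace Ω] [Countable ι]
    [NormedAddCommGroup E] (μ : Measure Ω) {S : ι → Set Ω} (hmeas : ∀ k, MeasurableSet (S k))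
    (hdisj : Pairwise (Function.onFun Disjoint S)) (hcover : ∀ x, ∃ k, x ∈ S k)
    {p : Ω → ℝ≥0∞} {q : ι → ℝ≥0∞} (hp : ∀ k, ∀ x ∈ S k, p x = q k)
    {f : Ω → E} {b : ι → E} (hf : ∀ k, ∀ x ∈ S k, f x = b k) (lam : ℝ) :
    eModular μ p f lam = ∑' k, evpow (‖b k‖ / lam) (q k) * μ (S k) := by
  have hunion : ⋃ k, S k = Set.univ :=
    Set.eq_univ_of_forall fun x => Set.mem_iUnion.mpr (hcover x)
  rw [eModular, ← setLIntegral_univ, ← hunion, lintegral_iUnion hmeas hdisj]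
  refine tsum_congr fun k => ?_
  rw [← setLIntegral_const]
  exact setLIntegral_congr_fun (hmeas k) fun x hx => by rw [hf k x hx, hp k x hx]

lemma eSeqNorm_eq_eVNorm_of_modular_eq {Ω I E F : Type*} [MeasurableSpace Ω]
    [NormedAddCommGroup E] [NormedAddCommGroup F] {μ : Measure Ω} {p : Ω → ℝ≥0∞}
    {f : Ω → E} {q : I → ℝ≥0∞} {h : I → F}
    (hmod : ∀ lam, 0 < lam → ∑' i, evpow (‖h i‖ / lam) (q i) = eModular μ p f lam) :
    eSeqNorm q h = eVNorm μ p f := by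
  unfold eSeqNorm eVNorm
  congr 1
  ext lam
  exact and_congr_right fun hlam => by rw [hmod lam hlam]

theorem seq_norm_of_pairings_eq_variable_Lp_norm_general
    {Ω : Type*} [MeasurableSpace Ω] (μ : Measure Ω)
    (l : ℕ) (S : Fin l → Set Ω) (hmeas : ∀ k, MeasurableSet (S k))
    (hdisj : Pairwise (Function.onFun Disjoint S))
    (hfin : ∀ k, μ (S k) < ⊤)
    (hcover : ∀ x : Ω, ∃ k, x ∈ S k)
    (pv : Fin l → ℝ≥0∞) (hpv1 : ∀ k, 1 ≤ pv k) (hpvfin : ∀ k, pv k < ⊤)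
    (p : Ω → ℝ≥0∞) (hconst : ∀ k, ∀ x ∈ S k, p x = pv k)
    (β : Fin l → ℝ) (f : Ω → ℝ)
    (hf : f = fun x => ∑ k, β k * (S k).indicator (fun _ => (1 : ℝ)) x) :
    eSeqNorm (fun k => pv k)
        (fun k => ∫ x, f x * ((S k).indicator (fun _ => (1 : ℝ)) x /
          (μ (S k)).toReal ^ ((1 - 1 / pv k).toReal)) ∂μ)
      = eVNorm μ p f ∧
    (eVNorm μ p f ≤ 1 →
      eSeqNorm (fun k => pv k)
        (fun k => ∫ x, f x * ((S k).indicator (fun _ => (1 : ℝ)) x /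
          (μ (S k)).toReal ^ ((1 - 1 / pv k).toReal)) ∂μ) ≤ 1) := by
  have hpv0 : ∀ k, pv k ≠ 0 := fun k => (zero_lt_one.trans_le (hpv1 k)).ne'
  have hfS : ∀ k, ∀ x ∈ S k, f x = β k := fun k x hx => by
    rw [hf]
    exact sum_mul_indicator_one_of_mem hdisj β hx
  have hpairing : (fun k => ∫ x, f x * ((S k).indicator (fun _ => (1 : ℝ)) x /
      (μ (S k)).toReal ^ ((1 - 1 / pv k).toReal)) ∂μ)
        = fun k => β k * μ.real (S k) ^ (pv k).toReal⁻¹ := funext fun k => by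
    rw [integral_mul_indicator_one_div μ (hmeas k) (hfS k), mul_div_assoc,
      ENNReal.toReal_one_sub_inv (hpv1 k), ← measureReal_def,
      Real.div_rpow_one_sub_inv measureReal_nonneg (ENNReal.toReal_ne_zero.mpr ⟨hpv0 k,
        (hpvfin k).ne⟩), one_div]
  have hnorm : eSeqNorm (fun k => pv k) (fun k => β k * μ.real (S k) ^ (pv k).toReal⁻¹)
      = eVNorm μ p f := by
    refine eSeqNorm_eq_eVNorm_of_modular_eq fun lam _ => ?_
    rw [eModular_eq_tsum_of_piecewise_const μ hmeas hdisj hcover hconst hfS]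
    refine tsum_congr fun k => ?_
    rw [Real.norm_eq_abs, abs_mul, abs_of_nonneg (Real.rpow_nonneg measureReal_nonneg _),
      mul_div_right_comm, evpow_mul_rpow_inv_toReal _ measureReal_nonneg (hpv0 k) (hpvfin k).ne,
      measureReal_def, ENNReal.ofReal_toReal (hfin k).ne, Real.norm_eq_abs]
  rw [hpairing]
  exact ⟨hnorm, fun h => hnorm ▸ h⟩

/-- For a simple exponent `p` constant equal to `pv k` on the members `S k` of a partition into
sets of finite positive measure, and a simple function `f = Σ β_k 1_{S k}` subordinate to the
partition, the `ℓ^{p(·)}` norm of the sequence `⟨f, u_k⟩`, where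
`u_k = 1_{S k} / μ(S k)^{1/p_k'}` (with `1/p_k' = 1 - 1/p_k`), equals `‖f‖_{L^{p(·)}(μ)}`;
in particular it is at most `1` whenever `‖f‖_{L^{p(·)}} ≤ 1`. -/
theorem seq_norm_of_pairings_eq_variable_Lp_norm
    {Ω : Type*} [MeasurableSpace Ω] (μ : Measure Ω) [SigmaFinite μ]
    (l : ℕ) (S : Fin l → Set Ω) (hmeas : ∀ k, MeasurableSet (S k))
    (hdisj : Pairwise (Function.onFun Disjoint S))
    (hfin : ∀ k, μ (S k) < ⊤) (hpos : ∀ k, 0 < μ (S k))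
    (hcover : ∀ x : Ω, ∃ k, x ∈ S k)
    (pv : Fin l → ℝ≥0∞) (hpv1 : ∀ k, 1 ≤ pv k) (hpvfin : ∀ k, pv k < ⊤)
    (p : Ω → ℝ≥0∞) (hconst : ∀ k, ∀ x ∈ S k, p x = pv k)
    (β : Fin l → ℝ) (f : Ω → ℝ)
    (hf : f = fun x => ∑ k, β k * (S k).indicator (fun _ => (1 : ℝ)) x) :
    eSeqNorm (fun k => pv k)
        (fun k => ∫ x, f x * ((S k).indicator (fun _ => (1 : ℝ)) x /
          (μ (S k)).toReal ^ ((1 - 1 / pv k).toReal)) ∂μ)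
      = eVNorm μ p f ∧
    (eVNorm μ p f ≤ 1 →
      eSeqNorm (fun k => pv k)
        (fun k => ∫ x, f x * ((S k).indicator (fun _ => (1 : ℝ)) x /
          (μ (S k)).toReal ^ ((1 - 1 / pv k).toReal)) ∂μ) ≤ 1) :=
  seq_norm_of_pairings_eq_variable_Lp_norm_general μ l S hmeas hdisj hfin hcover pv hpv1 hpvfin p
    hconst β f hf
end
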